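/- arXiv:0810.5203 — 3 statements merged into one kernel-verified Lean document; each statement's English description precedes it below -/
import Mathlib

section
/- Let f be a pmf on Z_+ with finite mean, let X have pmf f, and let α ∈ (0,1]. Then D(T_α(f)) < ∞ if and only if E[X log X] < ∞ (with the convention 0·log 0 = 0). -/
/-!
The thinning `T_α f = ∑ⱼ f j • Bin(j, α)` is a mixture of binomial laws; the binomial pmf
`Bin(j, α)` at `i` is the Bernstein polynomial `b_{j,i}` evaluated at `α`.

For a pmf `g` of finite mean `μ > 0`, `g i log (g i / po μ i)` differs from `g i log i!` by
`g i log (g i) + μ g i - log μ · i g i`, which is summable (the entropy is finite by comparison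
with the geometric law `2^-(i+1)`). Since `i log i - i ≤ log i! ≤ i log i`, `D(g) < ∞` iff
`E[Y log Y] < ∞` for `Y ∼ g`; when `μ = 0`, `g` is the point mass at `0` and both sides hold.

For `Y ∼ T_α f`, Tonelli gives `E[Y log Y] = ∑ⱼ f j E[Bⱼ log Bⱼ]` with `Bⱼ ∼ Bin(j, α)`, and
`α j log j + α log α · j ≤ E[Bⱼ log Bⱼ] ≤ α j log j`: the lower bound is Jensen for the convex
`x log x` (as `E Bⱼ = α j`), the upper one is `log Bⱼ ≤ log j`.
-/

open scoped BigOperators ENNReal Classical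
open Filter

/-- `f` is a probability mass function on `ℕ`. -/
def IsPmf (f : ℕ → ℝ) : Prop := (∀ i, 0 ≤ f i) ∧ HasSum f 1

/-- The mean of a pmf on `ℕ`. -/
noncomputable def pmfMean (f : ℕ → ℝ) : ℝ := ∑' i : ℕ, (i : ℝ) * f i

/-- The Poisson pmf with parameter `lam`. -/
noncomputable def po (lam : ℝ) (i : ℕ) : ℝ := lam ^ i * Real.exp (-lam) / (Nat.factorial i)

/-- The `α`-thinning of a pmf `f`. -/
noncomputable def thin (α : ℝ) (f : ℕ → ℝ) (i : ℕ) : ℝ :=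
  ∑' j : ℕ, f j * (Nat.choose j i : ℝ) * α ^ i * (1 - α) ^ (j - i)

/-- Convolution of two pmfs on `ℕ`. -/
def conv (f g : ℕ → ℝ) (i : ℕ) : ℝ := ∑ j ∈ Finset.range (i + 1), f j * g (i - j)

/-- `n`-fold convolution power of a pmf; `convPow f 1 = f`. -/
def convPow (f : ℕ → ℝ) : ℕ → ℕ → ℝ
  | 0 => fun i => if i = 0 then 1 else 0
  | n + 1 => conv (convPow f n) f

/-- Shannon entropy of a pmf on `ℕ`. -/
noncomputable def ent (f : ℕ → ℝ) : ℝ := -∑' i : ℕ, f i * Real.log (f i)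

/-- Relative entropy `D(f | g)`, valued in `ℝ≥0∞`; it is `∞` if the support of `f`
is not contained in that of `g` or if the defining series does not converge. -/
noncomputable def KL (f g : ℕ → ℝ) : ℝ≥0∞ :=
  if (∀ i, g i = 0 → f i = 0) ∧ Summable (fun i : ℕ => f i * Real.log (f i / g i)) then
    ENNReal.ofReal (∑' i : ℕ, f i * Real.log (f i / g i))
  else ⊤

/-- `D(f) = D(f | po(λ))` where `λ` is the mean of `f`. -/
noncomputable def KLpo (f : ℕ → ℝ) : ℝ≥0∞ := KL f (po (pmfMean f))

/-- The size-biased pmf `S(f)`. -/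
noncomputable def sizeBias (f : ℕ → ℝ) (i : ℕ) : ℝ := (i + 1 : ℝ) * f (i + 1) / pmfMean f

open Finset Polynomial Real
open scoped Nat

lemma natCast_mul_log_natCast_nonneg (n : ℕ) : 0 ≤ (n : ℝ) * log n :=
  mul_nonneg n.cast_nonneg (log_natCast_nonneg n)

section Bernstein

variable {α : ℝ}

lemma bernsteinPolynomial_eval_eq (n ν : ℕ) (α : ℝ) :
    (bernsteinPolynomial ℝ n ν).eval α = n.choose ν * α ^ ν * (1 - α) ^ (n - ν) := by
  simp [bernsteinPolynomial]

lemma bernsteinPolynomial_eval_nonneg (hα0 : 0 ≤ α) (hα1 : α ≤ 1) (n ν : ℕ) :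
    0 ≤ (bernsteinPolynomial ℝ n ν).eval α := by
  have : 0 ≤ 1 - α := by linarith
  rw [bernsteinPolynomial_eval_eq]
  positivity

lemma sum_bernsteinPolynomial_eval (n : ℕ) (α : ℝ) :
    ∑ ν ∈ range (n + 1), (bernsteinPolynomial ℝ n ν).eval α = 1 := by
  rw [← eval_finsetSum, bernsteinPolynomial.sum, eval_one]

lemma sum_mul_bernsteinPolynomial_eval (n : ℕ) (α : ℝ) :
    ∑ ν ∈ range (n + 1), (ν : ℝ) * (bernsteinPolynomial ℝ n ν).eval α = n * α := by
  simpa [eval_finsetSum, nsmul_eq_mul] using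
    congrArg (eval α) (bernsteinPolynomial.sum_smul (R := ℝ) n)

lemma bernsteinPolynomial_eval_le_one (hα0 : 0 ≤ α) (hα1 : α ≤ 1) (n ν : ℕ) :
    (bernsteinPolynomial ℝ n ν).eval α ≤ 1 := by
  rcases lt_or_ge n ν with h | h
  · simp [bernsteinPolynomial.eq_zero_of_lt ℝ h]
  · rw [← sum_bernsteinPolynomial_eval n α]
    exact single_le_sum (fun k _ => bernsteinPolynomial_eval_nonneg hα0 hα1 n k)
      (mem_range.2 (Nat.lt_succ_of_le h))

lemma sum_bernsteinPolynomial_eval_mul_mul_log_le (hα0 : 0 ≤ α) (hα1 : α ≤ 1) (n : ℕ) :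
    ∑ ν ∈ range (n + 1), (bernsteinPolynomial ℝ n ν).eval α * (ν * log ν)
      ≤ α * (n * log n) := by
  have hlog : ∀ ν ∈ range (n + 1), log ν ≤ log n := by
    intro ν hν
    rcases Nat.eq_zero_or_pos ν with rfl | hpos
    · simpa using log_natCast_nonneg n
    · exact log_le_log (by exact_mod_cast hpos)
        (by exact_mod_cast Nat.lt_succ_iff.1 (mem_range.1 hν))
  calc ∑ ν ∈ range (n + 1), (bernsteinPolynomial ℝ n ν).eval α * (ν * log ν)
      ≤ ∑ ν ∈ range (n + 1), (ν : ℝ) * (bernsteinPolynomial ℝ n ν).eval α * log n := by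
        refine sum_le_sum fun ν hν => ?_
        have := mul_le_mul_of_nonneg_left (hlog ν hν)
          (mul_nonneg (Nat.cast_nonneg ν) (bernsteinPolynomial_eval_nonneg hα0 hα1 n ν))
        linarith
    _ = α * (n * log n) := by
        rw [← sum_mul, sum_mul_bernsteinPolynomial_eval]
        ring

lemma le_sum_bernsteinPolynomial_eval_mul_mul_log (hα0 : 0 < α) (hα1 : α ≤ 1) (n : ℕ) :
    α * (n * log n) + α * log α * n
      ≤ ∑ ν ∈ range (n + 1), (bernsteinPolynomial ℝ n ν).eval α * (ν * log ν) := by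
  have jensen := convexOn_mul_log.map_sum_le
    (fun ν _ => bernsteinPolynomial_eval_nonneg hα0.le hα1 n ν)
    (sum_bernsteinPolynomial_eval n α) (p := fun ν : ℕ => (ν : ℝ))
    (fun ν _ => Set.mem_Ici.2 (Nat.cast_nonneg ν))
  simp only [smul_eq_mul, mul_comm _ (_ : ℝ), sum_mul_bernsteinPolynomial_eval] at jensen
  refine le_trans (le_of_eq ?_) jensen
  rcases Nat.eq_zero_or_pos n with rfl | hn
  · simp
  · rw [log_mul hα0.ne' (by positivity)]
    ring

end Bernstein

lemma hasSum_iff_hasSum_prod_of_nonneg {β γ : Type*} {a : β × γ → ℝ} (ha : 0 ≤ a)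
    {g : β → ℝ} (hg : ∀ b, HasSum (fun c => a (b, c)) (g b)) {s : ℝ} :
    HasSum g s ↔ HasSum a s := by
  refine ⟨fun h => ?_, fun h => h.prod_fiberwise hg⟩
  obtain ⟨t, ht⟩ : Summable a := (summable_prod_of_nonneg ha).2
    ⟨fun b => (hg b).summable, by simpa only [(hg _).tsum_eq] using h.summable⟩
  rwa [(ht.prod_fiberwise hg).unique h] at ht

section Thinning

variable {f : ℕ → ℝ} {α : ℝ}

lemma thin_eq_tsum (α : ℝ) (f : ℕ → ℝ) (i : ℕ) :
    thin α f i = ∑' j, f j * (bernsteinPolynomial ℝ j i).eval α := by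
  simp only [thin, bernsteinPolynomial_eval_eq, mul_assoc]

lemma thin_nonneg (hf : ∀ j, 0 ≤ f j) (hα0 : 0 ≤ α) (hα1 : α ≤ 1) (i : ℕ) :
    0 ≤ thin α f i := by
  rw [thin_eq_tsum]
  exact tsum_nonneg fun j => mul_nonneg (hf j) (bernsteinPolynomial_eval_nonneg hα0 hα1 j i)

lemma hasSum_thin_mul_iff (hf : ∀ j, 0 ≤ f j) (hfs : Summable f) (hα0 : 0 ≤ α)
    (hα1 : α ≤ 1) {c : ℕ → ℝ} (hc : ∀ i, 0 ≤ c i) {s : ℝ} :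
    HasSum (fun i => thin α f i * c i) s ↔
      HasSum (fun j => f j * ∑ i ∈ range (j + 1), (bernsteinPolynomial ℝ j i).eval α * c i)
        s := by
  set a : ℕ × ℕ → ℝ := fun p => f p.1 * ((bernsteinPolynomial ℝ p.1 p.2).eval α * c p.2)
  have ha : 0 ≤ a := fun p =>
    mul_nonneg (hf _) (mul_nonneg (bernsteinPolynomial_eval_nonneg hα0 hα1 _ _) (hc _))
  have hrow : ∀ j, HasSum (fun i => a (j, i))
      (f j * ∑ i ∈ range (j + 1), (bernsteinPolynomial ℝ j i).eval α * c i) := by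
    intro j
    rw [mul_sum]
    refine hasSum_sum_of_ne_finset_zero fun i hi => ?_
    simp [a, bernsteinPolynomial.eq_zero_of_lt ℝ (by simp at hi; omega : j < i)]
  have hcol : ∀ i, HasSum (fun j => a (j, i)) (thin α f i * c i) := by
    intro i
    have hs : Summable fun j => f j * (bernsteinPolynomial ℝ j i).eval α :=
      hfs.of_nonneg_of_le
        (fun j => mul_nonneg (hf j) (bernsteinPolynomial_eval_nonneg hα0 hα1 j i))
        fun j => mul_le_of_le_one_right (hf j) (bernsteinPolynomial_eval_le_one hα0 hα1 j i)
    rw [thin_eq_tsum]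
    simpa only [a, mul_assoc] using hs.hasSum.mul_right (c i)
  rw [hasSum_iff_hasSum_prod_of_nonneg (fun p => ha p.swap) hcol,
    hasSum_iff_hasSum_prod_of_nonneg ha hrow, ← (Equiv.prodComm ℕ ℕ).hasSum_iff]
  rfl

lemma summable_thin_mul_iff (hf : ∀ j, 0 ≤ f j) (hfs : Summable f) (hα0 : 0 ≤ α)
    (hα1 : α ≤ 1) {c : ℕ → ℝ} (hc : ∀ i, 0 ≤ c i) :
    Summable (fun i => thin α f i * c i) ↔
      Summable
        (fun j => f j * ∑ i ∈ range (j + 1), (bernsteinPolynomial ℝ j i).eval α * c i) :=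
  exists_congr fun _ => hasSum_thin_mul_iff hf hfs hα0 hα1 hc

lemma IsPmf.thin (hf : IsPmf f) (hα0 : 0 ≤ α) (hα1 : α ≤ 1) : IsPmf (thin α f) := by
  refine ⟨thin_nonneg hf.1 hα0 hα1, ?_⟩
  simpa using (hasSum_thin_mul_iff hf.1 hf.2.summable hα0 hα1 (c := 1) fun _ => zero_le_one).2
    (by simpa only [Pi.one_apply, mul_one, sum_bernsteinPolynomial_eval] using hf.2)

lemma summable_mul_thin (hf : IsPmf f) (hmean : Summable fun j : ℕ => (j : ℝ) * f j)
    (hα0 : 0 ≤ α) (hα1 : α ≤ 1) : Summable fun i : ℕ => (i : ℝ) * thin α f i := by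
  have hs := (summable_thin_mul_iff hf.1 hf.2.summable hα0 hα1 (c := fun i => (i : ℝ))
    Nat.cast_nonneg).2 ?_
  · exact hs.congr fun i => mul_comm _ _
  · simp_rw [mul_comm _ ((_ : ℕ) : ℝ), sum_mul_bernsteinPolynomial_eval]
    exact (hmean.mul_left α).congr fun j => by ring

lemma summable_thin_mul_mul_log_iff (hf : IsPmf f)
    (hmean : Summable fun j : ℕ => (j : ℝ) * f j) (hα0 : 0 < α) (hα1 : α ≤ 1) :
    Summable (fun i : ℕ => thin α f i * (i * log i)) ↔
      Summable (fun j : ℕ => f j * (j * log j)) := by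
  rw [summable_thin_mul_iff hf.1 hf.2.summable hα0.le hα1 natCast_mul_log_natCast_nonneg]
  constructor
  · intro hs
    rw [← summable_mul_left_iff hα0.ne']
    refine (hs.sub (hmean.mul_left (α * log α))).of_nonneg_of_le
      (fun j => mul_nonneg hα0.le (mul_nonneg (hf.1 j) (natCast_mul_log_natCast_nonneg j)))
      fun j => ?_
    have := mul_le_mul_of_nonneg_left
      (le_sum_bernsteinPolynomial_eval_mul_mul_log hα0 hα1 j) (hf.1 j)
    linarith
  · intro hs
    refine (hs.mul_left α).of_nonneg_of_le (fun j => mul_nonneg (hf.1 j)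
      (sum_nonneg fun i _ => mul_nonneg (bernsteinPolynomial_eval_nonneg hα0.le hα1 j i)
        (natCast_mul_log_natCast_nonneg i))) fun j => ?_
    have := mul_le_mul_of_nonneg_left
      (sum_bernsteinPolynomial_eval_mul_mul_log_le hα0.le hα1 j) (hf.1 j)
    linarith

end Thinning

lemma mul_log_add_sub_le_mul_log {x t : ℝ} (hx : 0 ≤ x) (ht : 0 < t) :
    x * log t + x - t ≤ x * log x := by
  rcases hx.eq_or_lt with rfl | hx
  · simpa using ht.le
  · have := mul_le_mul_of_nonneg_left (log_le_sub_one_of_pos (div_pos ht hx)) hx.le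
    rw [log_div ht.ne' hx.ne', mul_sub_one, mul_div_cancel₀ _ hx.ne'] at this
    linarith

lemma log_factorial_le_mul_log (n : ℕ) : log n ! ≤ n * log n := by
  rw [← log_pow]
  exact log_le_log (by positivity) (by exact_mod_cast n.factorial_le_pow)

lemma mul_log_sub_le_log_factorial (n : ℕ) : n * log n - n ≤ log n ! := by
  rcases n.eq_zero_or_pos with rfl | hn
  · simp
  have : (0 : ℝ) < n := by exact_mod_cast hn
  have h := log_le_log (by positivity) (pow_div_factorial_le_exp (n : ℝ) n.cast_nonneg n)
  rw [log_exp, log_div (by positivity) (by positivity), log_pow] at h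
  linarith

namespace IsPmf

variable {g : ℕ → ℝ}

lemma le_one (hg : IsPmf g) (i : ℕ) : g i ≤ 1 :=
  le_hasSum hg.2 i fun j _ => hg.1 j

lemma eq_zero_of_pmfMean_eq_zero (hg : IsPmf g) (hgm : Summable fun i : ℕ => (i : ℝ) * g i)
    (h0 : pmfMean g = 0) {i : ℕ} (hi : i ≠ 0) : g i = 0 := by
  have hsum : HasSum (fun j : ℕ => (j : ℝ) * g j) 0 := h0 ▸ hgm.hasSum
  have hterms := (hasSum_zero_iff_of_nonneg fun j => mul_nonneg (Nat.cast_nonneg j) (hg.1 j)).1 hsum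
  simpa [hi] using congrFun hterms i

lemma summable_mul_log (hg : IsPmf g) (hgm : Summable fun i : ℕ => (i : ℝ) * g i) :
    Summable fun i => g i * log (g i) := by
  refine Summable.of_norm_bounded
    ((summable_geometric_two.mul_left (1 / 2)).add ((hgm.add hg.2.summable).mul_left (log 2)))
    fun i => ?_
  have htan := mul_log_add_sub_le_mul_log (hg.1 i) (t := (1 / 2) ^ (i + 1)) (by positivity)
  rw [log_pow, one_div, log_inv] at htan
  rw [Real.norm_of_nonpos
    (mul_nonpos_of_nonneg_of_nonpos (hg.1 i) (log_nonpos (hg.1 i) (hg.le_one i)))]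
  simp only [one_div, pow_succ] at htan ⊢
  push_cast at htan
  nlinarith [hg.1 i]

end IsPmf

lemma summable_mul_log_factorial_iff {g : ℕ → ℝ} (hg : ∀ i, 0 ≤ g i)
    (hgm : Summable fun i : ℕ => (i : ℝ) * g i) :
    Summable (fun i : ℕ => g i * log i !) ↔ Summable (fun i : ℕ => g i * (i * log i)) := by
  constructor
  · intro hs
    refine (hs.add hgm).of_nonneg_of_le
      (fun i => mul_nonneg (hg i) (natCast_mul_log_natCast_nonneg i)) fun i => ?_
    have := mul_le_mul_of_nonneg_left (mul_log_sub_le_log_factorial i) (hg i)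
    linarith
  · intro hs
    exact hs.of_nonneg_of_le
      (fun i => mul_nonneg (hg i) (log_nonneg (by exact_mod_cast i.factorial_pos)))
      fun i => mul_le_mul_of_nonneg_left (log_factorial_le_mul_log i) (hg i)

lemma po_pos {μ : ℝ} (hμ : 0 < μ) (i : ℕ) : 0 < po μ i := by
  unfold po
  positivity

lemma mul_log_div_po {μ : ℝ} (hμ : 0 < μ) (x : ℝ) (i : ℕ) :
    x * log (x / po μ i) = x * log x + μ * x - log μ * (i * x) + x * log i ! := by
  rcases eq_or_ne x 0 with rfl | hx
  · simp
  · rw [log_div hx (po_pos hμ i).ne', po, log_div (by positivity) (by positivity),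
      log_mul (by positivity) (exp_pos _).ne', log_pow, log_exp]
    ring

lemma KL_lt_top_iff {f g : ℕ → ℝ} (hfg : ∀ i, g i = 0 → f i = 0) :
    KL f g < ⊤ ↔ Summable fun i => f i * log (f i / g i) := by
  unfold KL
  split_ifs with h
  · exact iff_of_true ENNReal.ofReal_lt_top h.2
  · exact iff_of_false (lt_irrefl ⊤) fun hs => h ⟨hfg, hs⟩

lemma KLpo_lt_top_iff {g : ℕ → ℝ} (hg : IsPmf g)
    (hgm : Summable fun i : ℕ => (i : ℝ) * g i) :
    KLpo g < ⊤ ↔ Summable fun i : ℕ => g i * (i * log i) := by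
  have hμ0 : 0 ≤ pmfMean g := tsum_nonneg fun i => mul_nonneg (Nat.cast_nonneg i) (hg.1 i)
  rcases hμ0.eq_or_lt with hμ | hμ
  · have hδ : ∀ i ≠ 0, g i = 0 := fun i hi => hg.eq_zero_of_pmfMean_eq_zero hgm hμ.symm hi
    have hsupp : ∀ i, po (pmfMean g) i = 0 → g i = 0 := by
      intro i hi
      rcases eq_or_ne i 0 with rfl | hi0
      · simp [po] at hi
      · exact hδ i hi0
    refine iff_of_true ((KL_lt_top_iff hsupp).2 ?_) ?_ <;>
      refine summable_of_ne_finset_zero (s := {0}) fun i hi => ?_ <;>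
      simp [hδ i (by simpa using hi)]
  · rw [KLpo, KL_lt_top_iff fun i hi => absurd hi (po_pos hμ i).ne',
      ← summable_mul_log_factorial_iff hg.1 hgm]
    have hrest := ((hg.summable_mul_log hgm).add (hg.2.summable.mul_left (pmfMean g))).sub
      (hgm.mul_left (log (pmfMean g)))
    exact summable_iff_of_summable_sub (hrest.congr fun i => by rw [mul_log_div_po hμ]; ring)

/-- For a pmf `f` on `ℕ` with finite mean and `α ∈ (0,1]`, `D(T_α(f)) < ∞` if and only if
`E[X log X] < ∞` where `X` has pmf `f` (with the convention `0·log 0 = 0`). -/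
theorem relEntropy_thin_lt_top_iff (f : ℕ → ℝ) (hf : IsPmf f)
    (hmean : Summable (fun i : ℕ => (i : ℝ) * f i))
    (α : ℝ) (hα : α ∈ Set.Ioc (0 : ℝ) 1) :
    KLpo (thin α f) < ⊤ ↔ Summable (fun i : ℕ => f i * ((i : ℝ) * Real.log i)) := by
  rw [KLpo_lt_top_iff (hf.thin hα.1.le hα.2) (summable_mul_thin hf hmean hα.1.le hα.2),
    summable_thin_mul_mul_log_iff hf hmean hα.1 hα.2]
end

section
/- Let f be a pmf on Z_+ with mean λ ∈ (0,∞), and let X_1, X_2, ... be i.i.d. with pmf f; write X̄_n = (1/n)Σ_{i=1}^n X_i. Then for every n ≥ 1, D(T_{1/n}(f^{*n})) ≤ λ/n + E[X̄_n log(X̄_n/λ)] (with the convention 0·log 0 = 0). -/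
open scoped BigOperators ENNReal Classical
open Filter

/-- The summand of `E[X̄_n log(X̄_n/λ)]` where `X̄_n` is the sample mean of `n` i.i.d.
variables with pmf `f` (so that `n·X̄_n` has pmf `f^{*n}`); the convention `0·log 0 = 0`
holds since `Real.log 0 = 0`. -/
noncomputable def lTerm (f : ℕ → ℝ) (lam : ℝ) (n : ℕ) (k : ℕ) : ℝ :=
  convPow f n k * ((k : ℝ) / n * Real.log ((k : ℝ) / (n * lam)))

/-- `l_n = E[X̄_n log(X̄_n/λ)]` as an extended nonnegative real, `∞` if the series fails
to converge. -/
noncomputable def lSeq (f : ℕ → ℝ) (lam : ℝ) (n : ℕ) : ℝ≥0∞ :=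
  if Summable (lTerm f lam n) then ENNReal.ofReal (∑' k : ℕ, lTerm f lam n k) else ⊤

/-! The thinned law `T_{1/n}(f^{*n})` is the mixture `∑ₖ f^{*n}(k) Bin(k, 1/n)` and has mean `λ`.
Written as a sum of the terms `x log (x / y) - x + y`, which are nonnegative and convex in `x`,
relative entropy to `po(λ)` is convex along mixtures, so `D(T_{1/n}(f^{*n}))` is at most the
`f^{*n}`-average of `D(Bin(k, p) | po(λ))`. Comparing logarithms termwise, with
`C(k, i) i! ≤ kⁱ` and `log (1 - p) ≤ -p`, gives
`D(Bin(k, p) | po(λ)) ≤ k p² + k p log (k p / λ) - k p + λ`; averaging over `k` with `p = 1/n`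
and `∑ₖ k f^{*n}(k) = nλ` leaves `λ/n + E[X̄ₙ log (X̄ₙ / λ)]`. -/

open Real Finset

lemma summable_of_tsum_ofReal_ne_top {ι : Type*} {f : ι → ℝ} (hf : ∀ i, 0 ≤ f i)
    (h : ∑' i, ENNReal.ofReal (f i) ≠ ⊤) : Summable f :=
  (ENNReal.summable_toReal h).congr fun i => ENNReal.toReal_ofReal (hf i)

lemma hasSum_of_tsum_ofReal_eq {ι : Type*} {f : ι → ℝ} {s : ℝ} (hf : ∀ i, 0 ≤ f i) (hs : 0 ≤ s)
    (h : ∑' i, ENNReal.ofReal (f i) = ENNReal.ofReal s) : HasSum f s := by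
  have hsum := summable_of_tsum_ofReal_ne_top hf (h ▸ ENNReal.ofReal_ne_top)
  rw [← ENNReal.ofReal_tsum_of_nonneg hf hsum,
    ENNReal.ofReal_eq_ofReal_iff (tsum_nonneg hf) hs] at h
  exact h ▸ hsum.hasSum

lemma IsPmf.summable_mul_of_le_one {q x : ℕ → ℝ} (hq : IsPmf q) (hx0 : ∀ k, 0 ≤ x k)
    (hx1 : ∀ k, x k ≤ 1) : Summable fun k => q k * x k :=
  hq.2.summable.of_nonneg_of_le (fun k => mul_nonneg (hq.1 k) (hx0 k))
    fun k => mul_le_of_le_one_right (hq.1 k) (hx1 k)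

/-- Summed against two pmfs, `klTerm` has the same total as `x log (x / y)`, but termwise it is
nonnegative. -/
noncomputable def klTerm (x y : ℝ) : ℝ := x * log (x / y) - x + y

lemma klTerm_zero (y : ℝ) : klTerm 0 y = y := by simp [klTerm]

lemma klTerm_nonneg {x y : ℝ} (hx : 0 ≤ x) (hy : 0 < y) : 0 ≤ klTerm x y := by
  have h : klTerm x y = y * InformationTheory.klFun (x / y) := by
    rw [klTerm, InformationTheory.klFun]
    field_simp
    ring
  rw [h]
  exact mul_nonneg hy.le (InformationTheory.klFun_nonneg (by positivity))

lemma klTerm_eq_tangent_add {x g y : ℝ} (hx : 0 ≤ x) (hg : 0 < g) (hy : 0 < y) :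
    klTerm x y = klTerm g y + log (g / y) * (x - g) + klTerm x g := by
  rcases hx.eq_or_lt with rfl | hx
  · simp only [klTerm]
    ring
  · simp only [klTerm, log_div hx.ne' hy.ne', log_div hg.ne' hy.ne', log_div hx.ne' hg.ne']
    ring

lemma tangent_le_klTerm {x g y : ℝ} (hx : 0 ≤ x) (hg : 0 < g) (hy : 0 < y) :
    klTerm g y + log (g / y) * (x - g) ≤ klTerm x y := by
  rw [klTerm_eq_tangent_add hx hg hy]
  linarith [klTerm_nonneg hx hg]

theorem ofReal_klTerm_tsum_mul_le {q x : ℕ → ℝ} {y : ℝ} (hq : IsPmf q) (hx : ∀ k, 0 ≤ x k)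
    (hqx : Summable fun k => q k * x k) (hy : 0 < y) :
    ENNReal.ofReal (klTerm (∑' k, q k * x k) y) ≤ ∑' k, ENNReal.ofReal (q k * klTerm (x k) y) := by
  set G := ∑' k, q k * x k
  have hqx0 : ∀ k, 0 ≤ q k * x k := fun k => mul_nonneg (hq.1 k) (hx k)
  rcases (tsum_nonneg hqx0 : 0 ≤ G).eq_or_lt with hG | hG
  · have hqx_zero : (fun k => q k * x k) = 0 :=
      (hasSum_zero_iff_of_nonneg hqx0).1 (hG ▸ hqx.hasSum)
    have hzero : ∀ k, q k * klTerm (x k) y = q k * y := by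
      intro k
      rcases mul_eq_zero.1 (congrFun hqx_zero k) with h | h <;> simp [h, klTerm_zero]
    rw [show G = 0 from hG.symm, klTerm_zero, tsum_congr fun k => congrArg ENNReal.ofReal (hzero k),
      ← ENNReal.ofReal_tsum_of_nonneg (fun k => mul_nonneg (hq.1 k) hy.le)
        (hq.2.summable.mul_right y), tsum_mul_right, hq.2.tsum_eq, one_mul]
  · by_cases htop : ∑' k, ENNReal.ofReal (q k * klTerm (x k) y) = ⊤
    · simp [htop]
    have hnn : ∀ k, 0 ≤ q k * klTerm (x k) y :=
      fun k => mul_nonneg (hq.1 k) (klTerm_nonneg (hx k) hy)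
    have hs := summable_of_tsum_ofReal_ne_top hnn htop
    rw [← ENNReal.ofReal_tsum_of_nonneg hnn hs]
    refine ENNReal.ofReal_le_ofReal ?_
    -- the tangent line of `klTerm · y` at the mean `G` averages to `klTerm G y`
    have htangent :
        HasSum (fun k => q k * (klTerm G y + log (G / y) * (x k - G))) (klTerm G y) := by
      have h := (hq.2.mul_left (klTerm G y - log (G / y) * G)).add
        (hqx.hasSum.mul_left (log (G / y)))
      rw [mul_one, sub_add_cancel] at h
      exact h.congr_fun fun k => by ring
    exact hasSum_le (fun k => mul_le_mul_of_nonneg_left (tangent_le_klTerm (hx k) hG hy) (hq.1 k))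
      htangent hs.hasSum

theorem tsum_ofReal_klTerm_tsum_mul_le {q r : ℕ → ℝ} {b : ℕ → ℕ → ℝ} (hq : IsPmf q)
    (hb0 : ∀ k i, 0 ≤ b k i) (hb1 : ∀ k i, b k i ≤ 1) (hr : ∀ i, 0 < r i) :
    ∑' i, ENNReal.ofReal (klTerm (∑' k, q k * b k i) (r i))
      ≤ ∑' k, ENNReal.ofReal (q k) * ∑' i, ENNReal.ofReal (klTerm (b k i) (r i)) := by
  calc ∑' i, ENNReal.ofReal (klTerm (∑' k, q k * b k i) (r i))
      ≤ ∑' i, ∑' k, ENNReal.ofReal (q k * klTerm (b k i) (r i)) :=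
        ENNReal.tsum_le_tsum fun i => ofReal_klTerm_tsum_mul_le hq (hb0 · i)
          (hq.summable_mul_of_le_one (hb0 · i) (hb1 · i)) (hr i)
    _ = _ := by
        rw [ENNReal.tsum_comm]
        refine tsum_congr fun k => ?_
        rw [← ENNReal.tsum_mul_left]
        exact tsum_congr fun i => ENNReal.ofReal_mul (hq.1 k)

theorem KL_le_of_tsum_ofReal_klTerm_le {g r : ℕ → ℝ} {c : ℝ} (hg : IsPmf g) (hr : HasSum r 1)
    (hr0 : ∀ i, 0 < r i) (h : ∑' i, ENNReal.ofReal (klTerm (g i) (r i)) ≤ ENNReal.ofReal c) :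
    KL g r ≤ ENNReal.ofReal c := by
  have hnn : ∀ i, 0 ≤ klTerm (g i) (r i) := fun i => klTerm_nonneg (hg.1 i) (hr0 i)
  have hs : Summable fun i => klTerm (g i) (r i) :=
    summable_of_tsum_ofReal_ne_top hnn (ne_top_of_le_ne_top ENNReal.ofReal_ne_top h)
  have hlog : HasSum (fun i => g i * log (g i / r i)) (∑' i, klTerm (g i) (r i)) := by
    have h := (hs.hasSum.add hg.2).sub hr
    rw [add_sub_cancel_right] at h
    exact h.congr_fun fun i => by rw [klTerm]; ring
  rw [KL, if_pos ⟨fun i h0 => absurd h0 (hr0 i).ne', hlog.summable⟩, hlog.tsum_eq,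
    ENNReal.ofReal_tsum_of_nonneg hnn hs]
  exact h

theorem hasSum_mul_tsum_mul {q h c : ℕ → ℝ} {b : ℕ → ℕ → ℝ} {s : ℝ} (hq : IsPmf q)
    (hb0 : ∀ k i, 0 ≤ b k i) (hb1 : ∀ k i, b k i ≤ 1) (hh : ∀ i, 0 ≤ h i)
    (hbc : ∀ k, HasSum (fun i => h i * b k i) (c k)) (hs : HasSum (fun k => q k * c k) s) :
    HasSum (fun i => h i * ∑' k, q k * b k i) s := by
  have hhb : ∀ k i, 0 ≤ h i * b k i := fun k i => mul_nonneg (hh i) (hb0 k i)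
  have hc : ∀ k, 0 ≤ c k := fun k => (hbc k).nonneg (hhb k)
  refine hasSum_of_tsum_ofReal_eq
    (fun i => mul_nonneg (hh i) (tsum_nonneg fun k => mul_nonneg (hq.1 k) (hb0 k i)))
    (hs.nonneg fun k => mul_nonneg (hq.1 k) (hc k)) ?_
  calc ∑' i, ENNReal.ofReal (h i * ∑' k, q k * b k i)
      = ∑' i, ∑' k, ENNReal.ofReal (q k) * ENNReal.ofReal (h i * b k i) := by
        refine tsum_congr fun i => ?_
        rw [← tsum_mul_left, ENNReal.ofReal_tsum_of_nonneg
          (fun k => by simpa only [mul_left_comm] using mul_nonneg (hq.1 k) (hhb k i))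
          ((hq.summable_mul_of_le_one (hb0 · i) (hb1 · i)).mul_left (h i))]
        exact tsum_congr fun k => by rw [← ENNReal.ofReal_mul (hq.1 k), mul_left_comm]
    _ = ∑' k, ENNReal.ofReal (q k * c k) := by
        rw [ENNReal.tsum_comm]
        refine tsum_congr fun k => ?_
        rw [ENNReal.tsum_mul_left, ← ENNReal.ofReal_tsum_of_nonneg (hhb k) (hbc k).summable,
          (hbc k).tsum_eq, ENNReal.ofReal_mul (hq.1 k)]
    _ = ENNReal.ofReal s := by
        rw [← ENNReal.ofReal_tsum_of_nonneg (fun k => mul_nonneg (hq.1 k) (hc k)) hs.summable,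
          hs.tsum_eq]

section Binomial

noncomputable def binomialPmf (p : ℝ) (k i : ℕ) : ℝ :=
  (k.choose i : ℝ) * p ^ i * (1 - p) ^ (k - i)

variable {p : ℝ}

lemma binomialPmf_nonneg (hp0 : 0 ≤ p) (hp1 : p ≤ 1) (k i : ℕ) : 0 ≤ binomialPmf p k i := by
  have : 0 ≤ 1 - p := by linarith
  unfold binomialPmf
  positivity

lemma binomialPmf_eq_zero_of_lt {k i : ℕ} (h : k < i) : binomialPmf p k i = 0 := by
  simp [binomialPmf, Nat.choose_eq_zero_of_lt h]

lemma sum_range_binomialPmf (p : ℝ) (k : ℕ) : ∑ i ∈ range (k + 1), binomialPmf p k i = 1 := by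
  have h := (add_pow p (1 - p) k).symm
  rw [add_sub_cancel, one_pow] at h
  rw [← h]
  exact sum_congr rfl fun i _ => by rw [binomialPmf]; ring

lemma sum_range_mul_binomialPmf (p : ℝ) (k : ℕ) :
    ∑ i ∈ range (k + 1), (i : ℝ) * binomialPmf p k i = k * p := by
  have h := congrArg (Polynomial.eval p) (bernsteinPolynomial.sum_smul ℝ k)
  simp only [Polynomial.eval_finsetSum, bernsteinPolynomial,
    Polynomial.eval_mul, Polynomial.eval_pow, Polynomial.eval_natCast, Polynomial.eval_sub,
    Polynomial.eval_one, Polynomial.eval_X, nsmul_eq_mul] at h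
  exact h

lemma binomialPmf_eq_zero_of_notMem_range {k i : ℕ} (hi : i ∉ range (k + 1)) :
    binomialPmf p k i = 0 :=
  binomialPmf_eq_zero_of_lt (by simpa using hi)

lemma hasSum_binomialPmf (p : ℝ) (k : ℕ) : HasSum (binomialPmf p k) 1 := by
  rw [← sum_range_binomialPmf p k]
  exact hasSum_sum_of_ne_finset_zero fun _ hi => binomialPmf_eq_zero_of_notMem_range hi

lemma hasSum_mul_binomialPmf (p : ℝ) (k : ℕ) :
    HasSum (fun i : ℕ => (i : ℝ) * binomialPmf p k i) (k * p) := by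
  rw [← sum_range_mul_binomialPmf p k]
  exact hasSum_sum_of_ne_finset_zero fun _ hi => by
    rw [binomialPmf_eq_zero_of_notMem_range hi, mul_zero]

lemma binomialPmf_le_one (hp0 : 0 ≤ p) (hp1 : p ≤ 1) (k i : ℕ) : binomialPmf p k i ≤ 1 :=
  le_hasSum (hasSum_binomialPmf p k) i fun j _ => binomialPmf_nonneg hp0 hp1 k j

end Binomial

section Poisson

variable {lam : ℝ}

lemma po_pos_s8 (hlam : 0 < lam) (i : ℕ) : 0 < po lam i := by
  unfold po
  positivity

lemma hasSum_po (hlam : 0 < lam) : HasSum (po lam) 1 := by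
  refine (ProbabilityTheory.hasSum_one_poissonMeasure lam.toNNReal).congr_fun fun i => ?_
  rw [po, Real.coe_toNNReal _ hlam.le]
  ring

lemma log_po (hlam : 0 < lam) (i : ℕ) :
    log (po lam i) = i * log lam - lam - log (i.factorial : ℝ) := by
  rw [po, log_div (by positivity) (by positivity), log_mul (by positivity) (exp_ne_zero _),
    log_pow, log_exp]
  ring

theorem log_binomialPmf_div_po_le {p : ℝ} {k i : ℕ} (hp0 : 0 < p) (hlam : 0 < lam)
    (hb : 0 < binomialPmf p k i) :
    log (binomialPmf p k i / po lam i)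
      ≤ i * log (k * p / lam) + ((k : ℝ) - i) * log (1 - p) + lam := by
  have hik : i ≤ k := le_of_not_gt fun h => hb.ne' (binomialPmf_eq_zero_of_lt h)
  have hC : (0 : ℝ) < k.choose i := by exact_mod_cast Nat.choose_pos hik
  have hq : 0 < (1 - p) ^ (k - i) := pos_of_mul_pos_right hb (by positivity)
  have hlogb :
      log (binomialPmf p k i) = log (k.choose i) + i * log p + ((k : ℝ) - i) * log (1 - p) := by
    rw [binomialPmf, log_mul (by positivity) hq.ne', log_mul hC.ne' (by positivity), log_pow,
      log_pow, Nat.cast_sub hik]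
  have hchoose : log (k.choose i) + log (i.factorial : ℝ) ≤ i * log k := by
    rw [← log_mul hC.ne' (by positivity), ← log_pow]
    refine log_le_log (by positivity) ?_
    rw [mul_comm]
    exact_mod_cast (Nat.descFactorial_eq_factorial_mul_choose k i).symm.trans_le
      (Nat.descFactorial_le_pow k i)
  have hsplit : i * log (k * p / lam) = i * log k + i * log p - i * log lam := by
    rcases Nat.eq_zero_or_pos i with rfl | hi
    · simp
    have hk : (0 : ℝ) < k := by exact_mod_cast hi.trans_le hik
    rw [log_div (by positivity) hlam.ne', log_mul hk.ne' hp0.ne']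
    ring
  rw [log_div hb.ne' (po_pos_s8 hlam i).ne', hlogb, log_po hlam, hsplit]
  linarith

theorem sum_binomialPmf_mul_log_div_po_le {p : ℝ} (hp0 : 0 < p) (hp1 : p ≤ 1) (hlam : 0 < lam)
    (k : ℕ) : ∑ i ∈ range (k + 1), binomialPmf p k i * log (binomialPmf p k i / po lam i)
      ≤ k * p ^ 2 + klTerm (k * p) lam := by
  set b := binomialPmf p k
  have hlog_one_sub : (k - k * p) * log (1 - p) ≤ k * p ^ 2 - k * p := by
    rcases hp1.lt_or_eq with hp1 | rfl
    · have hlog : log (1 - p) ≤ -p := by linarith [log_le_sub_one_of_pos (sub_pos.2 hp1)]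
      calc (k - k * p) * log (1 - p) = k * (1 - p) * log (1 - p) := by ring
        _ ≤ k * (1 - p) * -p :=
          mul_le_mul_of_nonneg_left hlog (mul_nonneg k.cast_nonneg (by linarith))
        _ = k * p ^ 2 - k * p := by ring
    · simp
  calc ∑ i ∈ range (k + 1), b i * log (b i / po lam i)
      ≤ ∑ i ∈ range (k + 1),
          b i * (i * log (k * p / lam) + ((k : ℝ) - i) * log (1 - p) + lam) := by
        refine sum_le_sum fun i _ => ?_
        rcases (binomialPmf_nonneg hp0.le hp1 k i).eq_or_lt with h | h
        · simp [b, ← h]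
        · exact mul_le_mul_of_nonneg_left (log_binomialPmf_div_po_le hp0 hlam h) h.le
    _ = log (k * p / lam) * ∑ i ∈ range (k + 1), (i : ℝ) * b i
          + (k * log (1 - p) + lam) * ∑ i ∈ range (k + 1), b i
          - log (1 - p) * ∑ i ∈ range (k + 1), (i : ℝ) * b i := by
        simp only [mul_sum, ← sum_add_distrib, ← sum_sub_distrib]
        exact sum_congr rfl fun i _ => by ring
    _ = k * p * log (k * p / lam) + (k - k * p) * log (1 - p) + lam := by
        rw [sum_range_mul_binomialPmf, sum_range_binomialPmf]
        ring
    _ ≤ k * p ^ 2 + klTerm (k * p) lam := by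
        rw [klTerm]
        linarith

theorem tsum_ofReal_klTerm_binomialPmf_po_le {p : ℝ} (hp0 : 0 < p) (hp1 : p ≤ 1) (hlam : 0 < lam)
    (k : ℕ) : ∑' i, ENNReal.ofReal (klTerm (binomialPmf p k i) (po lam i))
      ≤ ENNReal.ofReal (k * p ^ 2 + klTerm (k * p) lam) := by
  set b := binomialPmf p k
  set S := ∑ i ∈ range (k + 1), b i * log (b i / po lam i)
  have hS : HasSum (fun i => klTerm (b i) (po lam i)) S := by
    have hfin : HasSum (fun i => b i * log (b i / po lam i)) S :=
      hasSum_sum_of_ne_finset_zero fun i hi => by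
        rw [show b i = 0 from binomialPmf_eq_zero_of_notMem_range hi, zero_mul]
    have h := (hfin.sub (hasSum_binomialPmf p k)).add (hasSum_po hlam)
    rwa [sub_add_cancel] at h
  rw [← ENNReal.ofReal_tsum_of_nonneg (fun i => klTerm_nonneg (binomialPmf_nonneg hp0.le hp1 k i)
    (po_pos_s8 hlam i)) hS.summable, hS.tsum_eq]
  exact ENNReal.ofReal_le_ofReal (sum_binomialPmf_mul_log_div_po_le hp0 hp1 hlam k)

end Poisson

section Thinning

variable {p : ℝ} {q : ℕ → ℝ}

lemma thin_eq_tsum_mul_binomialPmf (p : ℝ) (q : ℕ → ℝ) :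
    thin p q = fun i => ∑' k, q k * binomialPmf p k i :=
  funext fun i => tsum_congr fun k => by rw [binomialPmf]; ring

lemma isPmf_thin (hq : IsPmf q) (hp0 : 0 ≤ p) (hp1 : p ≤ 1) : IsPmf (thin p q) := by
  rw [thin_eq_tsum_mul_binomialPmf]
  refine ⟨fun i => tsum_nonneg fun k => mul_nonneg (hq.1 k) (binomialPmf_nonneg hp0 hp1 k i), ?_⟩
  simpa using hasSum_mul_tsum_mul (h := fun _ => 1) (c := fun _ => 1) hq
    (binomialPmf_nonneg hp0 hp1) (binomialPmf_le_one hp0 hp1) (fun _ => zero_le_one)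
    (fun k => by simpa using hasSum_binomialPmf p k) (by simpa using hq.2)

lemma hasSum_mul_thin {m : ℝ} (hq : IsPmf q) (hp0 : 0 ≤ p) (hp1 : p ≤ 1)
    (hm : HasSum (fun k : ℕ => (k : ℝ) * q k) m) :
    HasSum (fun i : ℕ => (i : ℝ) * thin p q i) (p * m) := by
  rw [thin_eq_tsum_mul_binomialPmf]
  refine hasSum_mul_tsum_mul hq (binomialPmf_nonneg hp0 hp1) (binomialPmf_le_one hp0 hp1)
    (fun i => i.cast_nonneg) (hasSum_mul_binomialPmf p) ?_
  exact (hm.mul_left p).congr_fun fun k => by ring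

end Thinning

theorem KL_thin_po_le {q : ℕ → ℝ} {p lam s : ℝ} (hq : IsPmf q) (hp0 : 0 < p) (hp1 : p ≤ 1)
    (hlam : 0 < lam) (hs : HasSum (fun k : ℕ => q k * (k * p ^ 2 + klTerm (k * p) lam)) s) :
    KL (thin p q) (po lam) ≤ ENNReal.ofReal s := by
  refine KL_le_of_tsum_ofReal_klTerm_le (isPmf_thin hq hp0.le hp1) (hasSum_po hlam)
    (po_pos_s8 hlam) ?_
  rw [thin_eq_tsum_mul_binomialPmf, ← hs.tsum_eq, ENNReal.ofReal_tsum_of_nonneg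
    (fun k => mul_nonneg (hq.1 k) (add_nonneg (by positivity)
      (klTerm_nonneg (by positivity) hlam))) hs.summable]
  refine (tsum_ofReal_klTerm_tsum_mul_le hq (binomialPmf_nonneg hp0.le hp1)
    (binomialPmf_le_one hp0.le hp1) (po_pos_s8 hlam)).trans (ENNReal.tsum_le_tsum fun k => ?_)
  rw [ENNReal.ofReal_mul (hq.1 k)]
  gcongr
  exact tsum_ofReal_klTerm_binomialPmf_po_le hp0 hp1 hlam k

section Convolution

variable {a b : ℕ → ℝ}

lemma hasSum_conv {A B : ℝ} (ha0 : ∀ i, 0 ≤ a i) (hb0 : ∀ i, 0 ≤ b i) (ha : HasSum a A)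
    (hb : HasSum b B) : HasSum (conv a b) (A * B) := by
  have h := hasSum_sum_range_mul_of_summable_norm
    (ha.summable.congr fun i => (Real.norm_of_nonneg (ha0 i)).symm)
    (hb.summable.congr fun i => (Real.norm_of_nonneg (hb0 i)).symm)
  rwa [ha.tsum_eq, hb.tsum_eq] at h

lemma isPmf_conv (ha : IsPmf a) (hb : IsPmf b) : IsPmf (conv a b) :=
  ⟨fun i => sum_nonneg fun j _ => mul_nonneg (ha.1 j) (hb.1 _),
    by simpa using hasSum_conv ha.1 hb.1 ha.2 hb.2⟩

lemma natCast_mul_conv (i : ℕ) :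
    (i : ℝ) * conv a b i
      = conv (fun j : ℕ => (j : ℝ) * a j) b i + conv a (fun j : ℕ => (j : ℝ) * b j) i := by
  simp only [conv, mul_sum, ← sum_add_distrib]
  refine sum_congr rfl fun j hj => ?_
  rw [Nat.cast_sub (Nat.lt_succ_iff.mp (mem_range.mp hj))]
  ring

lemma hasSum_mul_conv {ma mb : ℝ} (ha : IsPmf a) (hb : IsPmf b)
    (hma : HasSum (fun i : ℕ => (i : ℝ) * a i) ma) (hmb : HasSum (fun i : ℕ => (i : ℝ) * b i) mb) :
    HasSum (fun i : ℕ => (i : ℝ) * conv a b i) (ma + mb) := by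
  have h1 := hasSum_conv (fun j => mul_nonneg j.cast_nonneg (ha.1 j)) hb.1 hma hb.2
  have h2 := hasSum_conv ha.1 (fun j => mul_nonneg j.cast_nonneg (hb.1 j)) ha.2 hmb
  rw [mul_one] at h1
  rw [one_mul] at h2
  exact (h1.add h2).congr_fun natCast_mul_conv

variable {f : ℕ → ℝ}

lemma isPmf_convPow (hf : IsPmf f) : ∀ n, IsPmf (convPow f n)
  | 0 => ⟨fun i => by simp only [convPow]; split_ifs <;> norm_num, hasSum_ite_eq 0 1⟩
  | n + 1 => isPmf_conv (isPmf_convPow hf n) hf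

lemma hasSum_mul_convPow {m : ℝ} (hf : IsPmf f) (hm : HasSum (fun i : ℕ => (i : ℝ) * f i) m) :
    ∀ n : ℕ, HasSum (fun k : ℕ => (k : ℝ) * convPow f n k) (n * m)
  | 0 => by
      rw [Nat.cast_zero, zero_mul]
      exact hasSum_zero.congr_fun fun k => by simp only [convPow]; split_ifs with h <;> simp [h]
  | n + 1 => by
      rw [Nat.cast_succ, add_one_mul]
      exact hasSum_mul_conv (isPmf_convPow hf n) hf (hasSum_mul_convPow hf hm n) hm

end Convolution

lemma hasSum_convPow_mul_sq_add_klTerm {f : ℕ → ℝ} {lam : ℝ} {n : ℕ} (hn : n ≠ 0)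
    (hq : HasSum (convPow f n) 1) (hm : HasSum (fun k : ℕ => (k : ℝ) * convPow f n k) (n * lam))
    (hL : Summable (lTerm f lam n)) :
    HasSum (fun k : ℕ => convPow f n k * (k * (1 / n : ℝ) ^ 2 + klTerm (k * (1 / n : ℝ)) lam))
      (lam / n + ∑' k, lTerm f lam n k) := by
  have h := ((hm.mul_left ((1 / n : ℝ) ^ 2 - 1 / n)).add hL.hasSum).add (hq.mul_left lam)
  rw [show ((1 / n : ℝ) ^ 2 - 1 / n) * (n * lam) + ∑' k, lTerm f lam n k + lam * 1
    = lam / n + ∑' k, lTerm f lam n k by field_simp; ring] at h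
  refine h.congr_fun fun k => ?_
  rw [klTerm, lTerm, show (k : ℝ) * (1 / n) / lam = k / (n * lam) by field_simp]
  ring

/-- For a pmf `f` on `ℕ` with mean `λ ∈ (0,∞)` and every `n ≥ 1`,
`D(T_{1/n}(f^{*n})) ≤ λ/n + E[X̄_n log(X̄_n/λ)]`. -/
theorem relEntropy_thinned_convPow_le (f : ℕ → ℝ) (lam : ℝ) (hf : IsPmf f)
    (hmean : Summable (fun i : ℕ => (i : ℝ) * f i)) (hlam : pmfMean f = lam)
    (hpos : 0 < lam) (n : ℕ) (hn : 1 ≤ n) :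
    KLpo (thin (1 / n) (convPow f n)) ≤ ENNReal.ofReal (lam / n) + lSeq f lam n := by
  by_cases hL : Summable (lTerm f lam n)
  swap
  · simp [lSeq, hL]
  have hn0 : (0 : ℝ) < n := by exact_mod_cast hn
  have hp0 : (0 : ℝ) < 1 / n := by positivity
  have hp1 : (1 : ℝ) / n ≤ 1 := by rw [div_le_one hn0]; exact_mod_cast hn
  have hq : IsPmf (convPow f n) := isPmf_convPow hf n
  have hqmean := hasSum_mul_convPow hf (m := lam) (by rw [← hlam]; exact hmean.hasSum) n
  have hthin_mean : pmfMean (thin (1 / n) (convPow f n)) = lam := by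
    rw [pmfMean, (hasSum_mul_thin hq hp0.le hp1 hqmean).tsum_eq]
    field_simp
  calc KLpo (thin (1 / n) (convPow f n)) = KL (thin (1 / n) (convPow f n)) (po lam) := by
        rw [KLpo, hthin_mean]
    _ ≤ ENNReal.ofReal (lam / n + ∑' k, lTerm f lam n k) :=
        KL_thin_po_le hq hp0 hp1 hpos (hasSum_convPow_mul_sq_add_klTerm (by omega) hq.2 hqmean hL)
    _ ≤ ENNReal.ofReal (lam / n) + lSeq f lam n := by
        rw [lSeq, if_pos hL]
        exact ENNReal.ofReal_add_le
end

section
/- Let X_1, X_2, ... be i.i.d. random variables on Z_+ with common pmf f of mean λ ∈ (0,∞), and set X̄_n = (1/n)Σ_{i=1}^n X_i and l_n = E[X̄_n log(X̄_n/λ)] (with 0·log 0 = 0). Then l_n ≥ 0 and l_n ≤ l_{n-1} for all n ≥ 2; moreover, if l_k < ∞ for some k, then l_n → 0 as n → ∞. -/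
open scoped BigOperators ENNReal Classical
open Filter

/-!
With `Φ(x) = λ·klFun(x/λ) = x log(x/λ) - x + λ ≥ 0`, the correction `x - λ` has mean zero under
the law of `X̄_n`, so `l_n = E Φ(X̄_n)`; in particular `l_n ≥ 0`.

Given `S_{n+1} = m`, the law of `S_n` is a probability on `{0, …, m}` with mean `n m / (n + 1)`
(differentiate the generating function of `f^{*(n+1)}`), so Jensen's inequality gives
`E ψ(X̄_{n+1}) ≤ E ψ(X̄_n)` for every convex `ψ ≥ 0`; with `ψ = Φ` this is `l_{n+1} ≤ l_n`.

For the limit, `Φ ≤ η` near `λ` and `Φ ≤ M + (Φ - M)⁺` everywhere. The weak law of large numbers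
(here deduced from the strong law) makes `M · P(|X̄_n - λ| ≥ ρ)` small, and monotonicity applied
to the convex `(Φ - M)⁺` bounds `E (Φ - M)⁺(X̄_n)` for `n ≥ k` by `E (Φ - M)⁺(X̄_k)`, which is
small for large `M` by dominated convergence once `l_k < ∞`.
-/

open Finset Topology MeasureTheory InformationTheory

theorem tsum_ofReal_eq_one {u : ℕ → ℝ} (hu : ∀ i, 0 ≤ u i) (h : HasSum u 1) :
    ∑' i, ENNReal.ofReal (u i) = 1 := by
  rw [← ENNReal.ofReal_tsum_of_nonneg hu h.summable, h.tsum_eq, ENNReal.ofReal_one]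

theorem summable_of_tsum_ofReal_ne_top_s9 {u : ℕ → ℝ} (hu : ∀ i, 0 ≤ u i)
    (h : ∑' i, ENNReal.ofReal (u i) ≠ ⊤) : Summable u :=
  (ENNReal.summable_toReal h).congr fun i => ENNReal.toReal_ofReal (hu i)

theorem ENNReal.tsum_mul_tsum_eq_tsum_sum_range (f g : ℕ → ℝ≥0∞) :
    (∑' n, f n) * ∑' n, g n = ∑' n, ∑ k ∈ range (n + 1), f k * g (n - k) := by
  simp_rw [← Nat.sum_antidiagonal_eq_sum_range_succ fun k l => f k * g l,
    ← ENNReal.tsum_mul_right, ← ENNReal.tsum_mul_left, ← ENNReal.tsum_prod,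
    ← HasAntidiagonal.sigmaAntidiagonalEquivProd.tsum_eq, ENNReal.tsum_sigma']
  exact tsum_congr fun n => Finset.tsum_subtype (antidiagonal n) fun kl => f kl.1 * g kl.2

theorem tendsto_tsum_mul_ofReal_sub_natCast {w : ℕ → ℝ≥0∞} {φ : ℕ → ℝ}
    (h : ∑' k, w k * ENNReal.ofReal (φ k) ≠ ⊤) :
    Tendsto (fun M : ℕ => ∑' k, w k * ENNReal.ofReal (φ k - M)) atTop (𝓝 0) := by
  have hlim := tendsto_lintegral_of_dominated_convergence
    (μ := Measure.count) (F := fun (M : ℕ) k => w k * ENNReal.ofReal (φ k - M))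
    (f := 0) (fun k => w k * ENNReal.ofReal (φ k)) (fun _ => measurable_of_countable _)
    (fun M => ae_of_all _ fun k =>
      mul_le_mul_right (ENNReal.ofReal_le_ofReal (sub_le_self _ M.cast_nonneg)) _)
    (by rwa [lintegral_count]) (ae_of_all _ fun k => ?_)
  · simpa only [lintegral_count, Pi.zero_apply, tsum_zero] using hlim
  · refine tendsto_const_nhds.congr' ?_
    filter_upwards [eventually_ge_atTop ⌈φ k⌉₊] with M hM
    rw [Pi.zero_apply, ENNReal.ofReal_of_nonpos (sub_nonpos.mpr (Nat.ceil_le.mp hM)), mul_zero]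

theorem conv_nonneg {u v : ℕ → ℝ} (hu : ∀ i, 0 ≤ u i) (hv : ∀ i, 0 ≤ v i) (m : ℕ) :
    0 ≤ conv u v m :=
  sum_nonneg fun j _ => mul_nonneg (hu j) (hv (m - j))

theorem convPow_nonneg {f : ℕ → ℝ} (hf : ∀ i, 0 ≤ f i) (n m : ℕ) : 0 ≤ convPow f n m := by
  induction n generalizing m with
  | zero => unfold convPow; split_ifs <;> norm_num
  | succ n ih => exact conv_nonneg ih hf m

theorem HasSum.conv {u v : ℕ → ℝ} {a b : ℝ} (hu : HasSum u a) (hv : HasSum v b) :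
    HasSum (conv u v) (a * b) := by
  have h := hasSum_sum_range_mul_of_summable_norm (f := u) (g := v)
    (summable_norm_iff.mpr hu.summable) (summable_norm_iff.mpr hv.summable)
  rwa [hu.tsum_eq, hv.tsum_eq] at h

theorem hasSum_convPow {f : ℕ → ℝ} (hf : HasSum f 1) (n : ℕ) : HasSum (convPow f n) 1 := by
  induction n with
  | zero => exact hasSum_ite_eq 0 1
  | succ n ih => exact (mul_one (1 : ℝ)) ▸ ih.conv hf

theorem tsum_ofReal_conv {u v : ℕ → ℝ} (hu : ∀ i, 0 ≤ u i) (hv : ∀ i, 0 ≤ v i) :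
    ∑' m, ENNReal.ofReal (conv u v m)
      = (∑' i, ENNReal.ofReal (u i)) * ∑' i, ENNReal.ofReal (v i) := by
  rw [ENNReal.tsum_mul_tsum_eq_tsum_sum_range]
  refine tsum_congr fun m => ?_
  rw [conv, ENNReal.ofReal_sum_of_nonneg fun j _ => mul_nonneg (hu j) (hv _)]
  exact sum_congr rfl fun j _ => ENNReal.ofReal_mul (hu j)

section PowerSeries

open PowerSeries

theorem mk_conv (u v : ℕ → ℝ) : mk (conv u v) = mk u * mk v := by
  ext m
  simp [coeff_mul, Nat.sum_antidiagonal_eq_sum_range_succ_mk, conv]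

theorem mk_convPow (u : ℕ → ℝ) (n : ℕ) : mk (convPow u n) = mk u ^ n := by
  induction n with
  | zero => ext m; simp [convPow, coeff_one]
  | succ n ih => rw [pow_succ, ← ih, ← mk_conv]; rfl

theorem mk_natCast_mul (u : ℕ → ℝ) : mk (fun k => (k : ℝ) * u k) = X * d⁄dX ℝ (mk u) := by
  ext (_ | k)
  · simp
  · rw [coeff_succ_X_mul, coeff_derivative, coeff_mk, coeff_mk]
    push_cast
    ring

/-- The coefficient of `X^m` in `X (F^{n+1})' = (n + 1) F^n · X F'`, for `F = mk u`. -/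
theorem natCast_mul_convPow_succ (u : ℕ → ℝ) (n m : ℕ) :
    (m : ℝ) * convPow u (n + 1) m = (n + 1) * conv (convPow u n) (fun k => (k : ℝ) * u k) m := by
  have h := congrArg (coeff m) (congrArg (X * ·) (Derivation.leibniz_pow (d⁄dX ℝ) (mk u) (n + 1)))
  simp only [Nat.add_sub_cancel, nsmul_eq_mul, smul_eq_mul] at h
  have h1 := congrArg (coeff m) (mk_natCast_mul (convPow u (n + 1)))
  have h2 := congrArg (coeff m) (mk_conv (convPow u n) (fun k => (k : ℝ) * u k))
  rw [coeff_mk] at h1 h2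
  rw [h1, h2, mk_convPow, mk_convPow, mk_natCast_mul, h, ← map_natCast (C (R := ℝ)),
    mul_left_comm, coeff_C_mul, mul_left_comm X]
  push_cast
  rfl

end PowerSeries

section Convolution

variable {f : ℕ → ℝ}

theorem hasSum_natCast_mul_convPow {lam : ℝ} (hf : HasSum f 1)
    (hmean : HasSum (fun i : ℕ => (i : ℝ) * f i) lam) (n : ℕ) :
    HasSum (fun k : ℕ => (k : ℝ) * convPow f n k) (n * lam) := by
  cases n with
  | zero =>
    rw [Nat.cast_zero, zero_mul]
    convert hasSum_zero with k
    by_cases hk : k = 0 <;> simp [convPow, hk]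
  | succ n =>
    simp_rw [natCast_mul_convPow_succ]
    simpa using ((hasSum_convPow hf n).conv hmean).mul_left ((n : ℝ) + 1)

/-- Given `S_{n+1} = m`, the conditional mean of `S_n` is `n m / (n + 1)`. -/
theorem natCast_add_one_mul_sum_natCast_mul_convPow (n m : ℕ) :
    ((n : ℝ) + 1) * ∑ j ∈ range (m + 1), (j : ℝ) * (convPow f n j * f (m - j))
      = n * (m * convPow f (n + 1) m) := by
  have hsplit : (m : ℝ) * convPow f (n + 1) m
      = ∑ j ∈ range (m + 1), (j : ℝ) * (convPow f n j * f (m - j))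
        + conv (convPow f n) (fun k => (k : ℝ) * f k) m := by
    rw [show convPow f (n + 1) m = conv (convPow f n) f m from rfl, conv, conv, mul_sum,
      ← sum_add_distrib]
    refine sum_congr rfl fun j hj => ?_
    rw [Nat.cast_sub (Nat.lt_succ_iff.mp (mem_range.mp hj))]
    ring
  linear_combination natCast_mul_convPow_succ f n m - ((n : ℝ) + 1) * hsplit

/-- Jensen's inequality for the conditional law of `S_n` given `S_{n+1} = m`. -/
theorem convPow_succ_mul_le_sum (hf : ∀ i, 0 ≤ f i) {ψ : ℝ → ℝ}
    (hψ : ConvexOn ℝ (Set.Ici 0) ψ) {n : ℕ} (hn : n ≠ 0) (m : ℕ) :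
    convPow f (n + 1) m * ψ (m / (n + 1 : ℕ))
      ≤ ∑ j ∈ range (m + 1), convPow f n j * f (m - j) * ψ (j / n) := by
  set w : ℕ → ℝ := fun j => convPow f n j * f (m - j)
  have hw : ∀ j ∈ range (m + 1), 0 ≤ w j := fun j _ => mul_nonneg (convPow_nonneg hf n j) (hf _)
  have hsum : ∑ j ∈ range (m + 1), w j = convPow f (n + 1) m := rfl
  rcases (convPow_nonneg hf (n + 1) m).eq_or_lt with hP | hP
  · have hw0 := (sum_eq_zero_iff_of_nonneg hw).mp (hsum.trans hP.symm)
    rw [← hP, zero_mul]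
    refine (sum_eq_zero fun j hj => ?_).ge
    change w j * _ = 0
    rw [hw0 j hj, zero_mul]
  · have hcm : (range (m + 1)).centerMass w (fun j => (j : ℝ) / n) = m / (n + 1 : ℕ) := by
      have h := natCast_add_one_mul_sum_natCast_mul_convPow (f := f) n m
      rw [centerMass, hsum]
      simp only [smul_eq_mul]
      rw [show ∑ j ∈ range (m + 1), w j * ((j : ℝ) / n) = (∑ j ∈ range (m + 1), (j : ℝ) * w j) / n
        by rw [sum_div]; exact sum_congr rfl fun j _ => by ring]
      field_simp
      push_cast
      linear_combination h
    have hJ := hψ.map_centerMass_le hw (by rwa [hsum]) fun j _ =>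
      Set.mem_Ici.mpr (by positivity : (0 : ℝ) ≤ j / n)
    rw [hcm, centerMass, hsum, smul_eq_mul] at hJ
    calc convPow f (n + 1) m * ψ (m / (n + 1 : ℕ))
        ≤ convPow f (n + 1) m * ((convPow f (n + 1) m)⁻¹ * ∑ j ∈ range (m + 1), w j • ψ (j / n)) :=
          mul_le_mul_of_nonneg_left hJ hP.le
      _ = _ := by rw [← mul_assoc, mul_inv_cancel₀ hP.ne', one_mul]; rfl

end Convolution

/-- `E[ψ(X̄_n)]`, where `n X̄_n` has pmf `convPow f n`. -/
noncomputable def expectSampleMean (f : ℕ → ℝ) (n : ℕ) (ψ : ℝ → ℝ≥0∞) : ℝ≥0∞ :=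
  ∑' k : ℕ, ENNReal.ofReal (convPow f n k) * ψ (k / n)

section SampleMean

variable {f : ℕ → ℝ} {n : ℕ}

theorem expectSampleMean_mono {ψ₁ ψ₂ : ℝ → ℝ≥0∞} (h : ∀ x, ψ₁ x ≤ ψ₂ x) :
    expectSampleMean f n ψ₁ ≤ expectSampleMean f n ψ₂ :=
  ENNReal.tsum_le_tsum fun _ => mul_le_mul_right (h _) _

theorem expectSampleMean_add (ψ₁ ψ₂ : ℝ → ℝ≥0∞) :
    expectSampleMean f n (fun x => ψ₁ x + ψ₂ x)
      = expectSampleMean f n ψ₁ + expectSampleMean f n ψ₂ := by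
  simp only [expectSampleMean, mul_add, ENNReal.tsum_add]

theorem expectSampleMean_const_mul (c : ℝ≥0∞) (ψ : ℝ → ℝ≥0∞) :
    expectSampleMean f n (fun x => c * ψ x) = c * expectSampleMean f n ψ := by
  simp only [expectSampleMean, mul_left_comm _ c, ENNReal.tsum_mul_left]

theorem expectSampleMean_const (hf : IsPmf f) (c : ℝ≥0∞) :
    expectSampleMean f n (fun _ => c) = c := by
  rw [expectSampleMean, ENNReal.tsum_mul_right,
    tsum_ofReal_eq_one (convPow_nonneg hf.1 n) (hasSum_convPow hf.2 n), one_mul]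

theorem expectSampleMean_succ_le (hf : IsPmf f) {ψ : ℝ → ℝ} (hψ : ConvexOn ℝ (Set.Ici 0) ψ)
    (hψ0 : ∀ x, 0 ≤ x → 0 ≤ ψ x) (hn : n ≠ 0) :
    expectSampleMean f (n + 1) (fun x => ENNReal.ofReal (ψ x))
      ≤ expectSampleMean f n (fun x => ENNReal.ofReal (ψ x)) := by
  set u : ℕ → ℝ := fun j => convPow f n j * ψ (j / n)
  have hu : ∀ j, 0 ≤ u j := fun j => mul_nonneg (convPow_nonneg hf.1 n j) (hψ0 _ (by positivity))
  calc expectSampleMean f (n + 1) (fun x => ENNReal.ofReal (ψ x))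
      = ∑' m, ENNReal.ofReal (convPow f (n + 1) m * ψ (m / (n + 1 : ℕ))) :=
        tsum_congr fun m => (ENNReal.ofReal_mul (convPow_nonneg hf.1 _ m)).symm
    _ ≤ ∑' m, ENNReal.ofReal (conv u f m) :=
        ENNReal.tsum_le_tsum fun m => ENNReal.ofReal_le_ofReal <|
          (convPow_succ_mul_le_sum hf.1 hψ hn m).trans_eq (sum_congr rfl fun j _ => by ring)
    _ = (∑' j, ENNReal.ofReal (u j)) * ∑' i, ENNReal.ofReal (f i) := tsum_ofReal_conv hu hf.1
    _ = expectSampleMean f n (fun x => ENNReal.ofReal (ψ x)) := by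
        rw [tsum_ofReal_eq_one hf.1 hf.2, mul_one]
        exact tsum_congr fun j => ENNReal.ofReal_mul (convPow_nonneg hf.1 n j)

theorem antitoneOn_expectSampleMean (hf : IsPmf f) {ψ : ℝ → ℝ}
    (hψ : ConvexOn ℝ (Set.Ici 0) ψ) (hψ0 : ∀ x, 0 ≤ x → 0 ≤ ψ x) :
    AntitoneOn (fun n => expectSampleMean f n (fun x => ENNReal.ofReal (ψ x))) {n | 1 ≤ n} :=
  antitoneOn_nat_Ici_of_succ_le fun _ hn => expectSampleMean_succ_le hf hψ hψ0 (by omega)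

end SampleMean

section RelativeEntropy

variable {f : ℕ → ℝ} {lam : ℝ}

theorem convexOn_mul_klFun_div (hlam : 0 < lam) :
    ConvexOn ℝ (Set.Ici 0) (fun x => lam * klFun (x / lam)) := by
  have h := (convexOn_klFun.comp_linearMap (lam⁻¹ • LinearMap.id : ℝ →ₗ[ℝ] ℝ)).smul hlam.le
  have hpre : (lam⁻¹ • LinearMap.id : ℝ →ₗ[ℝ] ℝ) ⁻¹' Set.Ici 0 = Set.Ici 0 := by
    ext x; simp [mul_nonneg_iff_of_pos_left (inv_pos.mpr hlam)]
  rw [hpre] at h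
  refine h.congr fun x _ => ?_
  simp [div_eq_inv_mul]

theorem lTerm_eq_add (hlam : lam ≠ 0) (n k : ℕ) :
    lTerm f lam n k = convPow f n k * (lam * klFun (k / n / lam))
      + (k / n * convPow f n k - lam * convPow f n k) := by
  rw [lTerm, klFun, div_div]
  field_simp
  ring

theorem hasSum_lTerm_iff (hf : HasSum f 1) (hmean : HasSum (fun i : ℕ => (i : ℝ) * f i) lam)
    (hlam : lam ≠ 0) {n : ℕ} (hn : n ≠ 0) {a : ℝ} :
    HasSum (lTerm f lam n) a ↔ HasSum (fun k => convPow f n k * (lam * klFun (k / n / lam))) a := by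
  have hd : HasSum (fun k => lTerm f lam n k - convPow f n k * (lam * klFun (k / n / lam))) 0 := by
    have h := ((hasSum_natCast_mul_convPow hf hmean n).div_const n).sub
      ((hasSum_convPow hf n).mul_left lam)
    rw [mul_div_cancel_left₀ _ (Nat.cast_ne_zero.mpr hn), mul_one, sub_self] at h
    refine h.congr_fun fun k => ?_
    rw [lTerm_eq_add hlam]
    ring
  exact ⟨fun h => by simpa using h.sub hd, fun h => by simpa using h.add hd⟩

theorem tsum_lTerm_nonneg (hf : IsPmf f) (hmean : HasSum (fun i : ℕ => (i : ℝ) * f i) lam)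
    (hlam : 0 < lam) {n : ℕ} (hn : n ≠ 0) (hs : Summable (lTerm f lam n)) :
    0 ≤ ∑' k, lTerm f lam n k :=
  ((hasSum_lTerm_iff hf.2 hmean hlam.ne' hn).mp hs.hasSum).nonneg fun k =>
    mul_nonneg (convPow_nonneg hf.1 n k) (mul_nonneg hlam.le (klFun_nonneg (by positivity)))

theorem lSeq_eq_expectSampleMean (hf : IsPmf f)
    (hmean : HasSum (fun i : ℕ => (i : ℝ) * f i) lam) (hlam : 0 < lam) {n : ℕ} (hn : n ≠ 0) :
    lSeq f lam n = expectSampleMean f n (fun x => ENNReal.ofReal (lam * klFun (x / lam))) := by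
  set g : ℕ → ℝ := fun k => convPow f n k * (lam * klFun (k / n / lam))
  have hg : ∀ k, 0 ≤ g k := fun k =>
    mul_nonneg (convPow_nonneg hf.1 n k) (mul_nonneg hlam.le (klFun_nonneg (by positivity)))
  have hE : expectSampleMean f n (fun x => ENNReal.ofReal (lam * klFun (x / lam)))
      = ∑' k, ENNReal.ofReal (g k) :=
    tsum_congr fun k => (ENNReal.ofReal_mul (convPow_nonneg hf.1 n k)).symm
  rw [hE, lSeq]
  by_cases hs : Summable (lTerm f lam n)
  · have hg_sum := (hasSum_lTerm_iff hf.2 hmean hlam.ne' hn).mp hs.hasSum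
    rw [if_pos hs, ← hg_sum.tsum_eq, ENNReal.ofReal_tsum_of_nonneg hg hg_sum.summable]
  · have hgs : ¬Summable g := fun hgs =>
      hs ((hasSum_lTerm_iff hf.2 hmean hlam.ne' hn).mpr hgs.hasSum).summable
    rw [if_neg hs]
    exact (not_ne_iff.mp (mt (summable_of_tsum_ofReal_ne_top_s9 hg) hgs)).symm

end RelativeEntropy

section WeakLaw

open ProbabilityTheory

variable {f : ℕ → ℝ} {lam : ℝ}

noncomputable def IsPmf.toPMF (hf : IsPmf f) : PMF ℕ :=
  ⟨fun i => ENNReal.ofReal (f i), tsum_ofReal_eq_one hf.1 hf.2 ▸ ENNReal.summable.hasSum⟩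

theorem IsPmf.toPMF_apply (hf : IsPmf f) (i : ℕ) : hf.toPMF i = ENNReal.ofReal (f i) := rfl

theorem IsPmf.integrable_natCast (hf : IsPmf f) (hmean : Summable fun i : ℕ => (i : ℝ) * f i) :
    Integrable (fun i : ℕ => (i : ℝ)) hf.toPMF.toMeasure := by
  refine ⟨(measurable_of_countable _).aestronglyMeasurable, ?_⟩
  rw [HasFiniteIntegral, lintegral_countable']
  simp_rw [PMF.toMeasure_apply_singleton _ _ (measurableSet_singleton _), IsPmf.toPMF_apply]
  refine lt_of_eq_of_lt (tsum_congr fun i => ?_) hmean.tsum_ofReal_lt_top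
  rw [ENNReal.ofReal_mul (Nat.cast_nonneg i), ENNReal.ofReal_natCast]
  simp

theorem IsPmf.integral_natCast (hf : IsPmf f) (hmean : HasSum (fun i : ℕ => (i : ℝ) * f i) lam) :
    ∫ i : ℕ, (i : ℝ) ∂hf.toPMF.toMeasure = lam := by
  rw [PMF.integral_eq_tsum _ _ (hf.integrable_natCast hmean.summable), ← hmean.tsum_eq]
  refine tsum_congr fun i => ?_
  rw [IsPmf.toPMF_apply, ENNReal.toReal_ofReal (hf.1 i), smul_eq_mul, mul_comm]

section IID

variable {Ω : Type*} [MeasurableSpace Ω] {P : Measure Ω} [IsProbabilityMeasure P]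
  {X : ℕ → Ω → ℕ}

theorem measure_sum_preimage_singleton (hX : ∀ i, Measurable (X i)) (hind : iIndepFun X P)
    (hf : ∀ i, 0 ≤ f i) (hlaw : ∀ i j, P (X i ⁻¹' {j}) = ENNReal.ofReal (f j)) (n m : ℕ) :
    P ((∑ i ∈ range n, X i) ⁻¹' {m}) = ENNReal.ofReal (convPow f n m) := by
  induction n generalizing m with
  | zero => by_cases hm : m = 0 <;> simp [convPow, hm, Pi.zero_def, eq_comm]
  | succ n ih =>
    have hS : Measurable (∑ i ∈ range n, X i) := by fun_prop
    have hset : (∑ i ∈ range (n + 1), X i) ⁻¹' {m}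
        = ⋃ j ∈ range (m + 1), (∑ i ∈ range n, X i) ⁻¹' {j} ∩ X n ⁻¹' {m - j} := by
      ext ω
      simp only [sum_range_succ, Set.mem_preimage, Pi.add_apply, Set.mem_singleton_iff,
        Set.mem_iUnion, Set.mem_inter_iff, mem_range, exists_prop]
      constructor
      · intro h; exact ⟨_, by omega, rfl, by omega⟩
      · rintro ⟨j, hj, h1, h2⟩; omega
    rw [hset, measure_biUnion_finset]
    · rw [show convPow f (n + 1) m = conv (convPow f n) f m from rfl, conv,
        ENNReal.ofReal_sum_of_nonneg fun j _ => mul_nonneg (convPow_nonneg hf n j) (hf _)]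
      refine sum_congr rfl fun j _ => ?_
      rw [ENNReal.ofReal_mul (convPow_nonneg hf n j), ← ih, ← hlaw n]
      exact (hind.indepFun_finsetSum_of_notMem hX notMem_range_self).measure_inter_preimage_eq_mul
        _ _ (measurableSet_singleton j) (measurableSet_singleton _)
    · intro j _ j' _ hjj'
      exact Set.disjoint_left.mpr fun ω h h' => hjj' (h.1.symm.trans h'.1)
    · exact fun j _ => (hS (measurableSet_singleton j)).inter (hX n (measurableSet_singleton _))

theorem measure_sampleMean_mem (hX : ∀ i, Measurable (X i)) (hind : iIndepFun X P)
    (hf : ∀ i, 0 ≤ f i) (hlaw : ∀ i j, P (X i ⁻¹' {j}) = ENNReal.ofReal (f j)) (n : ℕ)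
    (A : Set ℝ) :
    P {ω | ((∑ i ∈ range n, X i ω : ℕ) : ℝ) / n ∈ A} = expectSampleMean f n (A.indicator 1) := by
  have hS : Measurable (∑ i ∈ range n, X i) := by fun_prop
  have hset : {ω | ((∑ i ∈ range n, X i ω : ℕ) : ℝ) / n ∈ A}
      = (∑ i ∈ range n, X i) ⁻¹' {m : ℕ | (m : ℝ) / n ∈ A} := by
    ext ω; simp [Finset.sum_apply]
  rw [hset, ← Measure.map_apply hS .of_discrete,
    ← Measure.tsum_indicator_apply_singleton _ _ .of_discrete]
  refine tsum_congr fun m => ?_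
  by_cases hm : (m : ℝ) / n ∈ A <;> simp [hm, Measure.map_apply hS (measurableSet_singleton m),
    measure_sum_preimage_singleton hX hind hf hlaw]

end IID

theorem tendsto_expectSampleMean_indicator (hf : IsPmf f)
    (hmean : HasSum (fun i : ℕ => (i : ℝ) * f i) lam) {ε : ℝ} (hε : 0 < ε) :
    Tendsto (fun n => expectSampleMean f n ({x | ε ≤ |x - lam|}.indicator 1)) atTop (𝓝 0) := by
  obtain ⟨Ω, _, P, X, hX, hlaw, hind, _⟩ := exists_iid ℕ hf.toPMF.toMeasure
  have hsingle : ∀ i j, P (X i ⁻¹' {j}) = ENNReal.ofReal (f j) := fun i j => by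
    rw [← Measure.map_apply (hX i) (measurableSet_singleton j), (hlaw i).map_eq,
      PMF.toMeasure_apply_singleton _ _ (measurableSet_singleton j), IsPmf.toPMF_apply]
  have hcast : Measurable (fun k : ℕ => (k : ℝ)) := measurable_of_countable _
  have hint : Integrable (fun ω => (X 0 ω : ℝ)) P :=
    (integrable_map_measure hcast.aestronglyMeasurable (hX 0).aemeasurable).mp
      ((hlaw 0).map_eq ▸ hf.integrable_natCast hmean.summable)
  have hE : P[fun ω => (X 0 ω : ℝ)] = lam :=
    ((hlaw 0).integral_comp hcast.aestronglyMeasurable).trans (hf.integral_natCast hmean)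
  have hslln := strong_law_ae_real (fun i ω => (X i ω : ℝ)) hint
    (fun i j hij => (hind.indepFun hij).comp hcast hcast)
    (fun i => IdentDistrib.comp ⟨(hX i).aemeasurable, (hX 0).aemeasurable,
      by rw [(hlaw i).map_eq, (hlaw 0).map_eq]⟩ hcast)
  rw [hE] at hslln
  have hmeas : ∀ n : ℕ, AEStronglyMeasurable (fun ω => (∑ i ∈ range n, (X i ω : ℝ)) / n) P :=
    fun n => by fun_prop
  refine ((tendstoInMeasure_iff_dist.mp (tendstoInMeasure_of_tendsto_ae hmeas hslln)) ε hε).congr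
    fun n => ?_
  rw [← measure_sampleMean_mem hX hind hf.1 hsingle]
  congr 1
  ext ω
  simp [Real.dist_eq]

end WeakLaw

theorem exists_expectSampleMean_max_sub_natCast_lt {f : ℕ → ℝ} {ψ : ℝ → ℝ} {k : ℕ}
    (hfin : expectSampleMean f k (fun x => ENNReal.ofReal (ψ x)) ≠ ⊤) {δ : ℝ≥0∞} (hδ : 0 < δ) :
    ∃ M : ℕ, expectSampleMean f k (fun x => ENNReal.ofReal (max (ψ x - M) 0)) < δ := by
  obtain ⟨M, hM⟩ := ((tendsto_order.1 (tendsto_tsum_mul_ofReal_sub_natCast hfin)).2 δ hδ).exists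
  exact ⟨M, by simpa [expectSampleMean] using hM⟩

theorem ofReal_le_add_mul_indicator_add_max {ψ : ℝ → ℝ} {lam η ρ : ℝ}
    (hnear : ∀ x, |x - lam| < ρ → ψ x ≤ η) (M x : ℝ) :
    ENNReal.ofReal (ψ x) ≤ ENNReal.ofReal η + ENNReal.ofReal M * {x | ρ ≤ |x - lam|}.indicator 1 x
      + ENNReal.ofReal (max (ψ x - M) 0) := by
  by_cases hx : ρ ≤ |x - lam|
  · rw [Set.indicator_of_mem (show x ∈ {x | ρ ≤ |x - lam|} from hx), Pi.one_apply, mul_one]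
    calc ENNReal.ofReal (ψ x) ≤ ENNReal.ofReal (M + max (ψ x - M) 0) :=
          ENNReal.ofReal_le_ofReal (by linarith [le_max_left (ψ x - M) 0])
      _ ≤ ENNReal.ofReal M + ENNReal.ofReal (max (ψ x - M) 0) := ENNReal.ofReal_add_le
      _ ≤ _ := by gcongr; exact le_add_self
  · exact (ENNReal.ofReal_le_ofReal (hnear x (not_le.mp hx))).trans (le_self_add.trans le_self_add)

theorem tendsto_expectSampleMean_zero {f : ℕ → ℝ} {lam : ℝ} (hf : IsPmf f)
    (hmean : HasSum (fun i : ℕ => (i : ℝ) * f i) lam) {ψ : ℝ → ℝ}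
    (hψ : ConvexOn ℝ (Set.Ici 0) ψ) (hψc : ContinuousAt ψ lam) (hψlam : ψ lam = 0) {k : ℕ}
    (hk : k ≠ 0) (hfin : expectSampleMean f k (fun x => ENNReal.ofReal (ψ x)) ≠ ⊤) :
    Tendsto (fun n => expectSampleMean f n (fun x => ENNReal.ofReal (ψ x))) atTop (𝓝 0) := by
  rw [ENNReal.tendsto_nhds_zero]
  intro ε hε
  obtain ⟨r, -, hr, hrε⟩ := ENNReal.lt_iff_exists_real_btwn.mp hε
  set η := r / 3
  have hη : 0 < η := by
    have : 0 < r := ENNReal.ofReal_pos.mp hr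
    positivity
  obtain ⟨ρ, hρ, hnear⟩ := Metric.continuousAt_iff.mp hψc η hη
  have hψ_near : ∀ x, |x - lam| < ρ → ψ x ≤ η := fun x hx => by
    have h := hnear (x := x) (by rwa [Real.dist_eq])
    rw [Real.dist_eq, hψlam, sub_zero] at h
    exact (le_abs_self _).trans h.le
  obtain ⟨M, hM⟩ := exists_expectSampleMean_max_sub_natCast_lt hfin (ENNReal.ofReal_pos.mpr hη)
  have hfar := ENNReal.Tendsto.const_mul (tendsto_expectSampleMean_indicator hf hmean hρ)
    (Or.inr (ENNReal.ofReal_ne_top (r := M)))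
  rw [mul_zero] at hfar
  filter_upwards [eventually_ge_atTop k, (tendsto_order.1 hfar).2 _ (ENNReal.ofReal_pos.mpr hη)]
    with n hkn hfar_n
  have htail : ConvexOn ℝ (Set.Ici 0) fun x => max (ψ x - M) 0 :=
    (hψ.add_const (-(M : ℝ))).sup (convexOn_const 0 (convex_Ici 0)) |>.congr fun x _ => by
      simp [sub_eq_add_neg]
  have htail_le := antitoneOn_expectSampleMean hf htail (fun x _ => le_max_right _ 0)
    (Nat.one_le_iff_ne_zero.mpr hk) (show 1 ≤ n by omega) hkn
  calc expectSampleMean f n (fun x => ENNReal.ofReal (ψ x))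
      ≤ expectSampleMean f n (fun x => ENNReal.ofReal η
          + ENNReal.ofReal M * {x | ρ ≤ |x - lam|}.indicator 1 x
          + ENNReal.ofReal (max (ψ x - M) 0)) :=
        expectSampleMean_mono (ofReal_le_add_mul_indicator_add_max hψ_near M)
    _ = ENNReal.ofReal η + ENNReal.ofReal M * expectSampleMean f n ({x | ρ ≤ |x - lam|}.indicator 1)
          + expectSampleMean f n (fun x => ENNReal.ofReal (max (ψ x - M) 0)) := by
        rw [expectSampleMean_add, expectSampleMean_add, expectSampleMean_const hf,
          expectSampleMean_const_mul]
    _ ≤ ENNReal.ofReal η + ENNReal.ofReal η + ENNReal.ofReal η :=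
        add_le_add (add_le_add le_rfl hfar_n.le) (htail_le.trans hM.le)
    _ = ENNReal.ofReal r := by
        rw [← ENNReal.ofReal_add hη.le hη.le, ← ENNReal.ofReal_add (by positivity) hη.le]
        congr 1
        ring
    _ ≤ ε := hrε.le

/-- For i.i.d. `X_i` with pmf `f` of mean `λ ∈ (0,∞)` and `l_n = E[X̄_n log(X̄_n/λ)]`:
`l_n ≥ 0`, `l_n ≤ l_{n-1}` for `n ≥ 2`, and if `l_k < ∞` for some `k ≥ 1` then `l_n → 0`. -/
theorem lSeq_nonneg_antitone_tendsto_zero (f : ℕ → ℝ) (lam : ℝ) (hf : IsPmf f)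
    (hmean : Summable (fun i : ℕ => (i : ℝ) * f i)) (hlam : pmfMean f = lam)
    (hpos : 0 < lam) :
    (∀ n : ℕ, 1 ≤ n → Summable (lTerm f lam n) → 0 ≤ ∑' k : ℕ, lTerm f lam n k) ∧
    (∀ n : ℕ, 2 ≤ n → lSeq f lam n ≤ lSeq f lam (n - 1)) ∧
    ((∃ k : ℕ, 1 ≤ k ∧ lSeq f lam k ≠ ⊤) →
      Tendsto (fun n : ℕ => lSeq f lam n) atTop (nhds 0)) := by
  have hmean' : HasSum (fun i : ℕ => (i : ℝ) * f i) lam := hlam ▸ hmean.hasSum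
  have hl : ∀ n, 1 ≤ n →
      lSeq f lam n = expectSampleMean f n (fun x => ENNReal.ofReal (lam * klFun (x / lam))) :=
    fun n hn => lSeq_eq_expectSampleMean hf hmean' hpos (by omega)
  refine ⟨fun n hn hs => tsum_lTerm_nonneg hf hmean' hpos (by omega) hs, fun n hn => ?_, ?_⟩
  · rw [hl n (by omega), hl (n - 1) (by omega)]
    exact antitoneOn_expectSampleMean hf (convexOn_mul_klFun_div hpos)
      (fun x hx => mul_nonneg hpos.le (klFun_nonneg (div_nonneg hx hpos.le)))
      (show 1 ≤ n - 1 by omega) (show 1 ≤ n by omega) (by omega)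
  · rintro ⟨k, hk, hfin⟩
    rw [hl k hk] at hfin
    refine (tendsto_expectSampleMean_zero hf hmean' (convexOn_mul_klFun_div hpos)
      (by fun_prop) (by simp [hpos.ne', klFun_one]) (by omega) hfin).congr' ?_
    filter_upwards [eventually_ge_atTop 1] with n hn
    exact (hl n hn).symm
end
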